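/- (Lemma 4 of the paper.) Let DB be an uncertain database all of whose existential probabilities are nonnegative, with each item x carrying a weight w(x) ∈ [0,1]. Then for every nonempty pattern α, WES(α) ≤ wExpSup^cap(α); that is, the value wExpSup^cap(α) is always greater than or equal to the weighted expected support of α. -/

import Mathlib

variable {I : Type*}

/-- An uncertain sequence: a finite list of (item, existential probability) pairs. -/
abbrev USeq (I : Type*) := List (I × ℝ)

/-- An uncertain database: a finite list of uncertain sequences. -/
abbrev UDB (I : Type*) := List (USeq I)

/-- `α` occurs in `S`: some sublist of `S` has item list `α`. -/
def Occurs (α : List I) (S : USeq I) : Prop :=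
  ∃ o : USeq I, o.Sublist S ∧ o.map Prod.fst = α

/-- Maximum occurrence probability of pattern `α` in `S`
(`0` if `α` has no occurrence in `S`; `1` for the empty pattern). -/
noncomputable def maxPrS [DecidableEq I] (α : List I) (S : USeq I) : ℝ :=
  (((S.sublists.filter fun o => decide (o.map Prod.fst = α)).map
      fun o => (o.map Prod.snd).prod).maximum).unbotD 0

/-- Greedy projection: `projSeq α S = some S'` iff `α` occurs in `S`, in which case `S'`
is the suffix of `S` strictly after the last matched position of the greedy (leftmost)
occurrence of `α` in `S`.  For the empty pattern it is `S` itself. -/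
def projSeq [DecidableEq I] : List I → USeq I → Option (USeq I)
  | [], S => some S
  | _ :: _, [] => none
  | i :: α, (x, _) :: rest =>
      if x = i then projSeq α rest else projSeq (i :: α) rest

/-- The projected database `DB|α`. -/
def projDB [DecidableEq I] (α : List I) (DB : UDB I) : UDB I :=
  DB.filterMap (projSeq α)

/-- `P̂_D(i)`: maximum probability of an entry with item `i` over all sequences of `D`
(`0` if `i` occurs in no sequence of `D`). -/
noncomputable def Phat [DecidableEq I] (D : UDB I) (i : I) : ℝ :=
  (((D.flatten.filter fun e => decide (e.1 = i)).map Prod.snd).maximum).unbotD 0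

/-- `maxPr(α)` relative to `DB`: the product of per-step maximum probabilities over the
successively projected databases. -/
noncomputable def maxPrDB [DecidableEq I] (DB : UDB I) (α : List I) : ℝ :=
  ∏ k : Fin α.length, Phat (projDB (α.take k.val) DB) (α.get k)

/-- Expected support of `α` in `DB`. -/
noncomputable def expSup [DecidableEq I] (DB : UDB I) (α : List I) : ℝ :=
  (DB.map fun S => maxPrS α S).sum

/-- `expSup^cap` of a nonempty pattern (junk value `0` on the empty pattern). -/
noncomputable def expSupCap [DecidableEq I] (DB : UDB I) (α : List I) : ℝ :=
  match α.getLast? with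
  | none => 0
  | some i =>
      maxPrDB DB α.dropLast *
        ((projDB α.dropLast DB).map fun S' => maxPrS [i] S').sum

/-- Number of sequences of `D` in which item `i` occurs. -/
def supCount [DecidableEq I] (D : UDB I) (i : I) : ℕ :=
  (D.filter fun S => decide (i ∈ S.map Prod.fst)).length

/-- `expSupport^top` of a nonempty pattern (junk value `0` on the empty pattern). -/
noncomputable def expSupTop [DecidableEq I] (DB : UDB I) (α : List I) : ℝ :=
  match α.getLast? with
  | none => 0
  | some i =>
      maxPrDB DB α.dropLast * Phat (projDB α.dropLast DB) i *
        (supCount (projDB α.dropLast DB) i : ℝ)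

/-- Item `i` occurs in some sequence of `D`. -/
def ItemOccursIn (D : UDB I) (i : I) : Prop :=
  ∃ S ∈ D, i ∈ S.map Prod.fst

/-- `sWeight`: average weight of the items of a pattern. -/
noncomputable def sWeight (w : I → ℝ) (α : List I) : ℝ :=
  (α.map w).sum / (α.length : ℝ)

/-- Maximum weight among the items of a pattern (`0` for the empty pattern). -/
noncomputable def mxWs (w : I → ℝ) (α : List I) : ℝ :=
  ((α.map w).maximum).unbotD 0

/-- Maximum weight among items occurring in some sequence of `D` (`0` if none). -/
noncomputable def mxWDB (w : I → ℝ) (D : UDB I) : ℝ :=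
  ((D.flatten.map fun e => w e.1).maximum).unbotD 0

/-- `wgt^cap`. -/
noncomputable def wgtCap [DecidableEq I] (DB : UDB I) (w : I → ℝ) (α : List I) : ℝ :=
  max (mxWDB w (projDB α.dropLast DB)) (mxWs w α)

/-- Weighted expected support. -/
noncomputable def WES [DecidableEq I] (DB : UDB I) (w : I → ℝ) (α : List I) : ℝ :=
  expSup DB α * sWeight w α

/-- `wExpSup^cap`. -/
noncomputable def wExpSupCap [DecidableEq I] (DB : UDB I) (w : I → ℝ) (α : List I) : ℝ :=
  expSupCap DB α * wgtCap DB w α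

/-! Write `α = β ++ [i]`. An occurrence of `α` in `S` splits into an occurrence `o₁` of `β`
followed by an entry for `i`. Peeling off the first entry of `o₁` shows, by induction, that its
probability is at most `maxPr(β)`: that entry is bounded by `P̂_DB`, and the rest of `o₁` is an
occurrence in the projection of `S` by that entry's item. The greedy occurrence of `β` ends no
later than `o₁`, so the final entry lies in `S|β` and its probability is at most
`maxPr_{S|β}([i])`. Summing over `DB` gives `expSup(α) ≤ expSup^cap(α)`, and the average weight
`sWeight(α)` is at most the largest weight `mxW_s(α) ≤ wgt^cap(α)`. -/

namespace List

variable {α : Type*}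

theorem sum_map_filterMap {β M : Type*} [AddMonoid M] (f : α → Option β) (g : β → M)
    (l : List α) : ((l.filterMap f).map g).sum = (l.map fun a => ((f a).map g).getD 0).sum := by
  induction l with
  | nil => rfl
  | cons a l ih => cases h : f a <;> simp [h, ih]

variable [LinearOrder α] {l : List α} {a c d : α}

theorem le_unbotD_maximum (ha : a ∈ l) : a ≤ l.maximum.unbotD d :=
  WithBot.le_unbotD (le_maximum_of_mem' ha)

theorem unbotD_maximum_le (hd : d ≤ c) (h : ∀ a ∈ l, a ≤ c) : l.maximum.unbotD d ≤ c :=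
  (WithBot.unbotD_le_iff fun _ => hd).2
    (maximum_le_of_forall_le fun a ha => WithBot.coe_le_coe.2 (h a ha))

theorem le_unbotD_maximum_of_forall (hd : c ≤ d) (h : ∀ a ∈ l, c ≤ a) :
    c ≤ l.maximum.unbotD d := by
  cases l with
  | nil => simpa
  | cons b l => exact (h b mem_cons_self).trans (le_unbotD_maximum mem_cons_self)

end List

open List

theorem prod_snd_nonneg {o : USeq I} (h : ∀ e ∈ o, 0 ≤ e.2) : 0 ≤ (o.map Prod.snd).prod :=
  prod_nonneg fun x hx => by
    obtain ⟨e, he, rfl⟩ := mem_map.1 hx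
    exact h e he

section Projection

variable [DecidableEq I]

theorem projSeq_cons_cons (i : I) (β : List I) (e : I × ℝ) (S : USeq I) :
    projSeq (i :: β) (e :: S) = if e.1 = i then projSeq β S else projSeq (i :: β) S :=
  rfl

theorem suffix_of_projSeq_eq {β : List I} {S T : USeq I} (h : projSeq β S = some T) :
    T <:+ S := by
  induction S generalizing β with
  | nil => cases β <;> simp_all [projSeq]
  | cons e S ih =>
    cases β with
    | nil => simp_all [projSeq]
    | cons i β =>
      rw [projSeq_cons_cons] at h
      split_ifs at h <;> exact (ih h).trans (suffix_cons e S)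

theorem projSeq_cons (i : I) (β : List I) (S : USeq I) :
    projSeq (i :: β) S = (projSeq [i] S).bind (projSeq β) := by
  induction S with
  | nil => rfl
  | cons e S ih =>
    rw [projSeq_cons_cons, projSeq_cons_cons]
    split_ifs
    · simp [projSeq]
    · exact ih

theorem exists_projSeq_singleton {e : I × ℝ} {o S : USeq I} (h : e :: o <+ S) :
    ∃ T, projSeq [e.1] S = some T ∧ o <+ T := by
  induction S with
  | nil => simp at h
  | cons a S ih =>
    rw [projSeq_cons_cons]
    split_ifs with ha
    · exact ⟨S, by simp [projSeq], h.of_cons_cons⟩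
    · rcases sublist_cons_iff.1 h with h | ⟨r, hr, -⟩
      · exact ih h
      · exact absurd (congrArg Prod.fst (cons.inj hr).1).symm ha

theorem exists_projSeq_of_append_sublist {o₁ o₂ S : USeq I} (h : o₁ ++ o₂ <+ S) :
    ∃ T, projSeq (o₁.map Prod.fst) S = some T ∧ o₂ <+ T := by
  induction o₁ generalizing S with
  | nil => exact ⟨S, by simp [projSeq], h⟩
  | cons e o₁ ih =>
    obtain ⟨S₁, hS₁, h₁⟩ := exists_projSeq_singleton h
    obtain ⟨T, hT, hT₂⟩ := ih h₁
    exact ⟨T, by rw [map_cons, projSeq_cons, hS₁, Option.bind_some, hT], hT₂⟩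

theorem projDB_nil (D : UDB I) : projDB [] D = D := by
  simp [projDB, projSeq]

theorem projDB_cons (i : I) (β : List I) (D : UDB I) :
    projDB (i :: β) D = projDB β (projDB [i] D) := by
  rw [projDB, projDB, projDB, filterMap_filterMap]
  exact congrArg (filterMap · D) (funext fun S => projSeq_cons i β S)

theorem nonneg_of_mem_projDB {D : UDB I} (hp : ∀ S ∈ D, ∀ e ∈ S, 0 ≤ e.2) {β : List I} :
    ∀ T ∈ projDB β D, ∀ e ∈ T, 0 ≤ e.2 := by
  intro T hT e he
  obtain ⟨S, hS, hST⟩ := mem_filterMap.1 hT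
  exact hp S hS e ((suffix_of_projSeq_eq hST).subset he)

end Projection

section Probabilities

variable [DecidableEq I]

theorem le_Phat {D : UDB I} {S : USeq I} {e : I × ℝ} (hS : S ∈ D) (he : e ∈ S) :
    e.2 ≤ Phat D e.1 :=
  le_unbotD_maximum (mem_map_of_mem (mem_filter.2 ⟨mem_flatten_of_mem hS he, by simp⟩))

theorem Phat_nonneg {D : UDB I} (hp : ∀ S ∈ D, ∀ e ∈ S, 0 ≤ e.2) (i : I) : 0 ≤ Phat D i := by
  refine le_unbotD_maximum_of_forall le_rfl ?_
  simp only [mem_map, mem_filter, mem_flatten]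
  rintro _ ⟨e, ⟨⟨S, hS, he⟩, -⟩, rfl⟩
  exact hp S hS e he

theorem le_maxPrS {γ : List I} {o S : USeq I} (ho : o <+ S) (hγ : o.map Prod.fst = γ) :
    (o.map Prod.snd).prod ≤ maxPrS γ S :=
  le_unbotD_maximum (mem_map_of_mem (mem_filter.2 ⟨mem_sublists.2 ho, by simp [hγ]⟩))

theorem maxPrS_le {γ : List I} {S : USeq I} {c : ℝ} (hc : 0 ≤ c)
    (h : ∀ o : USeq I, o <+ S → o.map Prod.fst = γ → (o.map Prod.snd).prod ≤ c) :
    maxPrS γ S ≤ c := by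
  refine unbotD_maximum_le hc ?_
  simp only [mem_map, mem_filter, mem_sublists, decide_eq_true_eq]
  rintro _ ⟨o, ⟨ho, hγ⟩, rfl⟩
  exact h o ho hγ

theorem maxPrS_nonneg {S : USeq I} (hS : ∀ e ∈ S, 0 ≤ e.2) (γ : List I) : 0 ≤ maxPrS γ S := by
  refine le_unbotD_maximum_of_forall le_rfl ?_
  simp only [mem_map, mem_filter, mem_sublists]
  rintro _ ⟨o, ⟨ho, -⟩, rfl⟩
  exact prod_snd_nonneg fun e he => hS e (ho.subset he)

theorem maxPrDB_nil (D : UDB I) : maxPrDB D [] = 1 := by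
  simp [maxPrDB]

theorem maxPrDB_cons (D : UDB I) (i : I) (β : List I) :
    maxPrDB D (i :: β) = Phat D i * maxPrDB (projDB [i] D) β := by
  rw [maxPrDB, maxPrDB]
  refine (Fin.prod_univ_succ (n := β.length) _).trans (congrArg₂ (· * ·) ?_ ?_)
  · simp [projDB_nil]
  · refine Finset.prod_congr rfl fun k _ => ?_
    simp only [Fin.val_succ, take_succ_cons]
    rw [projDB_cons]
    rfl

theorem maxPrDB_nonneg {D : UDB I} (hp : ∀ S ∈ D, ∀ e ∈ S, 0 ≤ e.2) (β : List I) :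
    0 ≤ maxPrDB D β :=
  Finset.prod_nonneg fun _ _ => Phat_nonneg (nonneg_of_mem_projDB hp) _

theorem prod_le_maxPrDB {D : UDB I} (hp : ∀ S ∈ D, ∀ e ∈ S, 0 ≤ e.2) {S o : USeq I}
    (hS : S ∈ D) (ho : o <+ S) : (o.map Prod.snd).prod ≤ maxPrDB D (o.map Prod.fst) := by
  induction o generalizing D S with
  | nil => simp [maxPrDB_nil]
  | cons e o ih =>
    obtain ⟨T, hT, hoT⟩ := exists_projSeq_singleton ho
    have hT_mem : T ∈ projDB [e.1] D := mem_filterMap.2 ⟨S, hS, hT⟩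
    rw [map_cons, map_cons, prod_cons, maxPrDB_cons]
    exact mul_le_mul (le_Phat hS (ho.subset mem_cons_self))
      (ih (nonneg_of_mem_projDB hp) hT_mem hoT)
      (prod_snd_nonneg fun f hf => hp S hS f (ho.subset (mem_cons_of_mem e hf)))
      (Phat_nonneg hp _)

theorem maxPrS_append_singleton_le {DB : UDB I} (hp : ∀ S ∈ DB, ∀ e ∈ S, 0 ≤ e.2)
    {S : USeq I} (hS : S ∈ DB) (β : List I) (i : I) :
    maxPrS (β ++ [i]) S ≤ maxPrDB DB β * ((projSeq β S).map (maxPrS [i])).getD 0 := by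
  rcases hβ : projSeq β S with _ | T
  · refine maxPrS_le (by simp) fun o ho hoα => ?_
    obtain ⟨o₁, o₂, rfl, rfl, -⟩ := map_eq_append_iff.1 hoα
    obtain ⟨T, hT, -⟩ := exists_projSeq_of_append_sublist ho
    simp [hβ] at hT
  · have hT : ∀ e ∈ T, 0 ≤ e.2 := fun e he => hp S hS e ((suffix_of_projSeq_eq hβ).subset he)
    refine maxPrS_le (mul_nonneg (maxPrDB_nonneg hp β) (maxPrS_nonneg hT _)) fun o ho hoα => ?_
    obtain ⟨o₁, o₂, rfl, rfl, ho₂⟩ := map_eq_append_iff.1 hoα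
    obtain ⟨T', hT', ho₂T⟩ := exists_projSeq_of_append_sublist ho
    obtain rfl : T' = T := Option.some_inj.1 (hT'.symm.trans hβ)
    rw [map_append, prod_append]
    exact mul_le_mul (prod_le_maxPrDB hp hS ((sublist_append_left _ _).trans ho))
      (le_maxPrS ho₂T ho₂) (prod_snd_nonneg fun e he => hT e (ho₂T.subset he))
      (maxPrDB_nonneg hp _)

theorem expSupCap_append_singleton (DB : UDB I) (β : List I) (i : I) :
    expSupCap DB (β ++ [i]) = maxPrDB DB β * ((projDB β DB).map (maxPrS [i])).sum := by
  simp [expSupCap]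

theorem expSupCap_append_singleton_nonneg {DB : UDB I} (hp : ∀ S ∈ DB, ∀ e ∈ S, 0 ≤ e.2)
    (β : List I) (i : I) : 0 ≤ expSupCap DB (β ++ [i]) := by
  rw [expSupCap_append_singleton]
  refine mul_nonneg (maxPrDB_nonneg hp β) (sum_nonneg ?_)
  simp only [mem_map]
  rintro _ ⟨T, hT, rfl⟩
  exact maxPrS_nonneg (nonneg_of_mem_projDB hp T hT) _

theorem expSup_append_singleton_le {DB : UDB I} (hp : ∀ S ∈ DB, ∀ e ∈ S, 0 ≤ e.2)
    (β : List I) (i : I) : expSup DB (β ++ [i]) ≤ expSupCap DB (β ++ [i]) := by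
  rw [expSupCap_append_singleton, projDB, sum_map_filterMap, ← sum_map_mul_left]
  exact sum_le_sum fun S hS => maxPrS_append_singleton_le hp hS β i

end Probabilities

theorem sWeight_nonneg {w : I → ℝ} (hw : ∀ x, 0 ≤ w x) (α : List I) : 0 ≤ sWeight w α :=
  div_nonneg (sum_nonneg (by simpa using fun x _ => hw x)) (Nat.cast_nonneg _)

theorem sWeight_le_mxWs (w : I → ℝ) {α : List I} (hα : α ≠ []) : sWeight w α ≤ mxWs w α := by
  have hlen : (0 : ℝ) < α.length := by exact_mod_cast length_pos_iff.2 hα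
  rw [sWeight, div_le_iff₀ hlen, mul_comm, ← length_map (f := w), ← nsmul_eq_mul]
  exact sum_le_card_nsmul _ _ fun x hx => le_unbotD_maximum hx

/-- Lemma 4: if all probabilities of `DB` are nonnegative and all weights lie in `[0,1]`,
then for every nonempty pattern `α`, `WES(α) ≤ wExpSup^cap(α)`. -/
theorem WES_le_wExpSupCap [DecidableEq I]
    (DB : UDB I) (hp : ∀ S ∈ DB, ∀ e ∈ S, 0 ≤ e.2)
    (w : I → ℝ) (hw : ∀ x : I, w x ∈ Set.Icc (0 : ℝ) 1)
    (α : List I) (hα : α ≠ []) :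
    WES DB w α ≤ wExpSupCap DB w α := by
  have hsWeight : sWeight w α ≤ wgtCap DB w α := (sWeight_le_mxWs w hα).trans (le_max_right _ _)
  obtain ⟨β, i, rfl⟩ := (eq_nil_or_concat' α).resolve_left hα
  exact mul_le_mul (expSup_append_singleton_le hp β i) hsWeight
    (sWeight_nonneg (fun x => (hw x).1) _) (expSupCap_append_singleton_nonneg hp β i)
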